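/- arXiv:2002.03468 — 7 statements merged into one kernel-verified Lean document; each statement's English description precedes it below -/
import Mathlib

section
/- Let (M,C) be a C-set. Define on M² the binary relation (α,β) ≼ (γ,δ) iff ¬C(γ,α,β) ∧ ¬C(δ,α,β). Then ≼ is a preorder on M² (reflexive and transitive). -/
/-- The relation (α,β) ≼ (γ,δ) :⇔ ¬C(γ,α,β) ∧ ¬C(δ,α,β) is a preorder on M². -/
theorem cset_preceq_preorder {M : Type*} (C : M → M → M → Prop)
    (ax1 : ∀ x y z, C x y z → C x z y)
    (ax2 : ∀ x y z, C x y z → ¬ C y x z)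
    (ax3 : ∀ x y z w, C x y z → C x y w ∨ C w y z)
    (ax4 : ∀ x y, x ≠ y → C x y y) :
    Reflexive (fun p q : M × M => ¬ C q.1 p.1 p.2 ∧ ¬ C q.2 p.1 p.2) ∧
    Transitive (fun p q : M × M => ¬ C q.1 p.1 p.2 ∧ ¬ C q.2 p.1 p.2) := by
  have key : ∀ a b c d r : M, ¬ C c a b → ¬ C d a b →
      ¬ C r c d → ¬ C r a b := by
    intro a b c d r h1 h2 h3 h
    have h4 : C r a c := (ax3 r a b c h).resolve_right h1
    have h5 : C d a c := ax1 _ _ _ ((ax3 r c a d (ax1 _ _ _ h4)).resolve_left h3)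
    have h6 : C b a c := (ax3 d a c b h5).resolve_left h2
    have h7 : C r b c :=
      (ax3 r b a c (ax1 _ _ _ h)).resolve_right (ax2 b c a (ax1 _ _ _ h6))
    have h8 : C d b c := ax1 _ _ _ ((ax3 r c b d (ax1 _ _ _ h7)).resolve_left h3)
    have h9 : C a b c := (ax3 d b c a h8).resolve_left (fun hh => h2 (ax1 _ _ _ hh))
    exact ax2 a b c h9 h6
  constructor
  · rintro ⟨a, b⟩
    exact ⟨fun h => ax2 _ _ _ h h, fun h => ax2 _ _ _ (ax1 _ _ _ h) (ax1 _ _ _ h)⟩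
  · rintro p q r ⟨h1, h2⟩ ⟨h3, h4⟩
    exact ⟨key p.1 p.2 q.1 q.2 r.1 h1 h2 h3, key p.1 p.2 q.1 q.2 r.2 h1 h2 h4⟩
end

section
/- Let T be a tree (a partial order in which for each x the set {y : y ≤ x} is linearly ordered). On the set of maximal chains (branches) of T, define C(α,β,γ) iff α ∩ β = α ∩ γ ⊊ β ∩ γ. Then C is a C-relation on the set of branches of T. -/
/-- On the set of branches (maximal chains) of a tree, the relation
C(α,β,γ) :⇔ α∩β = α∩γ ⊊ β∩γ is a C-relation. -/
theorem branches_C_relation {T : Type*} [PartialOrder T]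
    (htree : ∀ x y z : T, y ≤ x → z ≤ x → y ≤ z ∨ z ≤ y) :
    let Br := {s : Set T // IsChain (· ≤ ·) s ∧ ∀ t : Set T, IsChain (· ≤ ·) t → s ⊆ t → s = t}
    let C : Br → Br → Br → Prop := fun a b c =>
      a.1 ∩ b.1 = a.1 ∩ c.1 ∧ a.1 ∩ b.1 ⊂ b.1 ∩ c.1
    (∀ x y z, C x y z → C x z y) ∧
    (∀ x y z, C x y z → ¬ C y x z) ∧
    (∀ x y z w, C x y z → C x y w ∨ C w y z) ∧
    (∀ x y, x ≠ y → C x y y) := by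
  intro Br C
  -- Branches are downward closed: anything below an element of a branch is in it.
  have mem_of_le : ∀ (s : Br), ∀ a b : T, b ∈ s.1 → a ≤ b → a ∈ s.1 := by
    rintro ⟨s, hch, hmax⟩ a b hb hab
    have key : ∀ c ∈ s, a ≠ c → a ≤ c ∨ c ≤ a := by
      intro c hc _
      rcases eq_or_ne c b with rfl | h
      · exact Or.inl hab
      · rcases hch hc hb h with h1 | h1
        · exact (htree b c a h1 hab).symm
        · exact Or.inl (hab.trans h1)
    have hchain : IsChain (· ≤ ·) (insert a s) := hch.insert key
    have := hmax (insert a s) hchain (Set.subset_insert a s)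
    show a ∈ s
    rw [this]; exact Set.mem_insert a s
  -- Two intersections with a common branch are comparable under ⊆.
  have comp : ∀ (x y z : Br), x.1 ∩ y.1 ⊆ x.1 ∩ z.1 ∨ x.1 ∩ z.1 ⊆ x.1 ∩ y.1 := by
    intro x y z
    by_contra hcon
    push_neg at hcon
    obtain ⟨h1, h2⟩ := hcon
    obtain ⟨a, ha, han⟩ := Set.not_subset.mp h1
    obtain ⟨b, hb, hbn⟩ := Set.not_subset.mp h2
    have hne : a ≠ b := by rintro rfl; exact han hb
    rcases x.2.1 ha.1 hb.1 hne with hle | hle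
    · exact han ⟨ha.1, mem_of_le z a b hb.2 hle⟩
    · exact hbn ⟨hb.1, mem_of_le y b a ha.2 hle⟩
  refine ⟨?_, ?_, ?_, ?_⟩
  · -- C x y z → C x z y
    rintro x y z ⟨h1, h2⟩
    exact ⟨h1.symm, by rw [← h1, Set.inter_comm z.1 y.1]; exact h2⟩
  · -- C x y z → ¬ C y x z
    rintro x y z ⟨h1, h2⟩ ⟨g1, g2⟩
    exact h2.ne (by rw [← g1, Set.inter_comm])
  · -- the branching axiom
    rintro x y z w ⟨h1, h2⟩
    by_cases hBw : y.1 ∩ z.1 ⊆ w.1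
    · -- w contains the big intersection: C x y w
      left
      obtain ⟨b, hb, hbn⟩ := Set.exists_of_ssubset h2
      have hAw : x.1 ∩ y.1 ⊆ x.1 ∩ w.1 := fun a ha => ⟨ha.1, hBw (h2.1 ha)⟩
      have hwA : x.1 ∩ w.1 ⊆ x.1 ∩ y.1 := by
        rintro a ⟨hax, haw⟩
        have hbw : b ∈ w.1 := hBw hb
        have hne : a ≠ b := by rintro rfl; exact hbn ⟨hax, hb.1⟩
        rcases w.2.1 haw hbw hne with hle | hle
        · exact ⟨hax, mem_of_le y a b hb.1 hle⟩
        · exact absurd ⟨mem_of_le x b a hax hle, hb.1⟩ hbn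
      refine ⟨Set.Subset.antisymm hAw hwA, ?_, ?_⟩
      · exact fun a ha => ⟨(h2.1 ha).1, hBw (h2.1 ha)⟩
      · intro hcon
        exact hbn (hcon ⟨hb.1, hBw hb⟩)
    · -- w branches off before y∩z: C w y z
      right
      have hyw : y.1 ∩ w.1 ⊆ y.1 ∩ z.1 := by
        rcases comp y w z with h | h
        · exact h
        · exact absurd (fun a ha => (h ha).2) hBw
      have hzw : z.1 ∩ w.1 ⊆ z.1 ∩ y.1 := by
        rcases comp z w y with h | h
        · exact h
        · exact absurd (fun a ha => (h ⟨ha.2, ha.1⟩).2) hBw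
      have heq : w.1 ∩ y.1 = w.1 ∩ z.1 := by
        apply Set.Subset.antisymm
        · rintro a ⟨haw, hay⟩; exact ⟨haw, (hyw ⟨hay, haw⟩).2⟩
        · rintro a ⟨haw, haz⟩; exact ⟨haw, (hzw ⟨haz, haw⟩).2⟩
      refine ⟨heq, ?_, ?_⟩
      · rintro a ⟨haw, hay⟩; exact hyw ⟨hay, haw⟩
      · intro hcon
        exact hBw (fun a ha => (hcon ha).1)
  · -- x ≠ y → C x y y
    intro x y hxy
    refine ⟨rfl, ?_, ?_⟩
    · rintro a ⟨hax, hay⟩; exact ⟨hay, hay⟩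
    · intro hcon
      have hsub : y.1 ⊆ x.1 := fun a ha => (hcon ⟨ha, ha⟩).1
      have := y.2.2 x.1 x.2.1 hsub
      exact hxy (Subtype.ext this.symm)
end

section
/- Let T be a precolored good tree of depth n with isolated leaves such that Iₙ(α) = {p(α)} for every leaf α. Then the set p(L) = {p(α) : α a leaf of T} is a maximal antichain of T. -/
/-- The possible forms of a maximal one-colored basic interval on a branch:
a singleton `{x}`, an interval `]x,y[` open on the right, or an interval `]x,y]`
closed on the right. -/
inductive IntervalForm : Type
  | singleton : IntervalForm
  | openOpen : IntervalForm
  | openClosed : IntervalForm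

/-- A set is densely ordered (as a suborder). -/
def DenselyOrderedIn {T : Type*} [Preorder T] (I : Set T) : Prop :=
  ∀ x ∈ I, ∀ y ∈ I, x < y → ∃ z ∈ I, x < z ∧ z < y

/-- `HasForm I f` : the basic interval `I` has the form `f`. -/
def HasForm {T : Type*} [Preorder T] (I : Set T) : IntervalForm → Prop
  | IntervalForm.singleton => ∃ x, I = {x}
  | IntervalForm.openOpen => DenselyOrderedIn I ∧ ∀ x ∈ I, ∃ y ∈ I, x < y
  | IntervalForm.openClosed => DenselyOrderedIn I ∧ ∃ m ∈ I, ∀ x ∈ I, x ≤ m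

/-- A precolored good tree of depth `n`. -/
structure PrecoloredGoodTree (T : Type*) [SemilatticeInf T] (n : ℕ) : Type _ where
  chains : ∀ x y z : T, y ≤ x → z ≤ x → y ≤ z ∨ z ≤ y
  leaves_above : ∀ x : T, ∃ l, x ≤ l ∧ IsMax l
  leaf_or_node : ∀ x : T, IsMax x ∨ ∃ a b : T, a ≠ b ∧ x = a ⊓ b
  I : T → Fin n → Set T
  branch_union : ∀ α : T, IsMax α → {y : T | y < α} = ⋃ j, I α j
  nonemp : ∀ α : T, IsMax α → ∀ j, (I α j).Nonempty
  ordered : ∀ α : T, IsMax α → ∀ j k : Fin n, j < k →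
      ∀ x ∈ I α j, ∀ y ∈ I α k, x < y
  form : Fin n → IntervalForm
  form_spec : ∀ α : T, IsMax α → ∀ j, HasForm (I α j) (form j)
  meet_cond : ∀ α β : T, IsMax α → IsMax β → ∀ j : Fin n, α ⊓ β ∈ I α j →
      α ⊓ β ∈ I β j ∧ ∀ i : Fin n, i < j → I α i = I β i

/-- If `T` is a precolored good tree with isolated leaves whose last interval is
`Iₙ(α) = {p(α)}`, then `p(L) = {p(α) : α a leaf}` is a maximal antichain of `T`. -/
theorem precolored_pred_set_maximal_antichain {T : Type*} [SemilatticeInf T] {n : ℕ}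
    (P : PrecoloredGoodTree T (n + 1))
    (hlast : ∀ α : T, IsMax α → ∃ p, p ⋖ α ∧ P.I α (Fin.last n) = {p}) :
    IsAntichain (· ≤ ·) {x : T | ∃ α : T, IsMax α ∧ x ⋖ α} ∧
    ∀ t : T, ∃ s ∈ {x : T | ∃ α : T, IsMax α ∧ x ⋖ α}, s ≤ t ∨ t ≤ s := by
  have key : ∀ α x : T, IsMax α → x ⋖ α → x ∈ P.I α (Fin.last n) := by
    intro α x hα hx
    obtain ⟨p, hp, hIp⟩ := hlast α hα
    have hxmem : x ∈ ⋃ j, P.I α j := by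
      rw [← P.branch_union α hα]; exact hx.lt
    obtain ⟨j, hj⟩ := Set.mem_iUnion.1 hxmem
    rcases eq_or_lt_of_le (Fin.le_last j) with h | h
    · rwa [← h]
    · exact absurd (P.ordered α hα j (Fin.last n) h x hj p (by rw [hIp]; rfl))
        (fun hplt => hx.2 hplt hp.lt)
  constructor
  · rintro x ⟨α, hα, hx⟩ y ⟨β, hβ, hy⟩ hxy hle
    have hxα := key α x hα hx
    have hyβ := key β y hβ hy
    have hxab : x ≤ α ⊓ β := le_inf hx.le (hle.trans hy.le)
    rcases hx.eq_or_eq hxab inf_le_left with h | h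
    · obtain ⟨q, hq, hIq⟩ := hlast β hβ
      have := (P.meet_cond α β hα hβ (Fin.last n) (h ▸ hxα)).1
      rw [hIq] at this hyβ
      exact hxy (h ▸ this.trans hyβ.symm)
    · have hab : α = β := le_antisymm (h ▸ inf_le_right) (hα (h ▸ inf_le_right))
      exact hx.2 (lt_of_le_of_ne hle hxy) (hab ▸ hy.lt)
  · intro t
    obtain ⟨α, htα, hα⟩ := P.leaves_above t
    obtain ⟨p, hp, hIp⟩ := hlast α hα
    refine ⟨p, ⟨α, hα, hp⟩, ?_⟩
    rcases eq_or_lt_of_le htα with h | h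
    · exact Or.inl (h ▸ hp.le)
    · right
      have ht : t ∈ ⋃ j, P.I α j := by rw [← P.branch_union α hα]; exact h
      obtain ⟨j, hj⟩ := Set.mem_iUnion.1 ht
      rcases eq_or_lt_of_le (Fin.le_last j) with hjl | hjl
      · rw [hjl, hIp] at hj; exact hj.le
      · exact (P.ordered α hα j (Fin.last n) hjl t hj p (by rw [hIp]; rfl)).le
end

section
/- Leaves of T ⋊ T₀ are isolated if and only if leaves of T₀ are isolated. -/
/-- A good tree: a partial order in which the set of elements below any point is a
chain, any two elements have a greatest lower bound, there is a maximal element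
(leaf) above every element, and every element is a leaf or a meet of two distinct
elements. -/
def IsGoodTree (X : Type*) [PartialOrder X] : Prop :=
  (∀ x y z : X, y ≤ x → z ≤ x → y ≤ z ∨ z ≤ y) ∧
  (∀ x y : X, ∃ m, IsGLB {x, y} m) ∧
  (∀ x : X, ∃ l, x ≤ l ∧ IsMax l) ∧
  (∀ x : X, IsMax x ∨ ∃ a b : X, a ≠ b ∧ IsGLB {a, b} x)

/-- The underlying set of the extension `T ⋊ T₀`: the disjoint union of the set of
nodes of `T` and of `L_T × T₀` where `L_T` is the set of leaves of `T`. -/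
def TreeExt (T T₀ : Type*) [PartialOrder T] : Type _ :=
  {x : T // ¬ IsMax x} ⊕ ({x : T // IsMax x} × T₀)

/-- The order of the extension `T ⋊ T₀`. -/
def extLe {T T₀ : Type*} [PartialOrder T] [PartialOrder T₀] :
    TreeExt T T₀ → TreeExt T T₀ → Prop
  | Sum.inl x, Sum.inl y => x.1 ≤ y.1
  | Sum.inl x, Sum.inr p => x.1 ≤ p.1.1
  | Sum.inr _, Sum.inl _ => False
  | Sum.inr p, Sum.inr q => p.1 = q.1 ∧ p.2 ≤ q.2

instance {T T₀ : Type*} [PartialOrder T] [PartialOrder T₀] :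
    PartialOrder (TreeExt T T₀) where
  le := extLe
  le_refl p := by cases p with
    | inl x => exact le_refl x.1
    | inr p => exact ⟨rfl, le_refl p.2⟩
  le_trans p q r hpq hqr := by
    cases p with
    | inl x =>
      cases q with
      | inl y =>
        cases r with
        | inl z => exact le_trans hpq hqr
        | inr u => exact le_trans hpq hqr
      | inr s =>
        cases r with
        | inl z => exact hqr.elim
        | inr u => exact le_trans hpq (by rw [show s.1 = u.1 from hqr.1])
    | inr p' =>
      cases q with
      | inl y => exact hpq.elim
      | inr s =>
        cases r with
        | inl z => exact hqr.elim
        | inr u => exact ⟨hpq.1.trans hqr.1, le_trans hpq.2 hqr.2⟩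
  le_antisymm p q hpq hqp := by
    cases p with
    | inl x =>
      cases q with
      | inl y => exact congrArg Sum.inl (Subtype.ext (le_antisymm hpq hqp))
      | inr s => exact hqp.elim
    | inr p' =>
      cases q with
      | inl y => exact hpq.elim
      | inr s =>
        cases p' with
        | mk a t =>
          cases s with
          | mk a' t' =>
            have h1 : a = a' := hpq.1
            subst h1
            exact congrArg Sum.inr (congrArg _ (le_antisymm hpq.2 hqp.2))

section Aux

variable {T T₀ : Type*} [PartialOrder T] [PartialOrder T₀]

lemma extLe_inr_inr (p q : {x : T // IsMax x} × T₀) :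
    @LE.le (TreeExt T T₀) Preorder.toLE (Sum.inr p) (Sum.inr q) ↔ p.1 = q.1 ∧ p.2 ≤ q.2 := Iff.rfl

lemma extLe_inl_inr (x : {x : T // ¬ IsMax x}) (q : {x : T // IsMax x} × T₀) :
    @LE.le (TreeExt T T₀) Preorder.toLE (Sum.inl x) (Sum.inr q) ↔ x.1 ≤ q.1.1 := Iff.rfl

lemma extLe_inr_inl (p : {x : T // IsMax x} × T₀) (y : {x : T // ¬ IsMax x}) :
    @LE.le (TreeExt T T₀) Preorder.toLE (Sum.inr p) (Sum.inl y) ↔ False := Iff.rfl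

lemma ext_inr_lt_inr (α : {x : T // IsMax x}) (s t : T₀) :
    @LT.lt (TreeExt T T₀) Preorder.toLT (Sum.inr (α, s)) (Sum.inr (α, t)) ↔ s < t := by
  constructor
  · intro h
    obtain ⟨hle, hnle⟩ := lt_iff_le_not_ge.1 h
    obtain ⟨-, h1⟩ := (extLe_inr_inr _ _).1 hle
    exact lt_iff_le_not_ge.2 ⟨h1, fun hle' => hnle ((extLe_inr_inr _ _).2 ⟨rfl, hle'⟩)⟩
  · intro h
    refine lt_iff_le_not_ge.2 ⟨(extLe_inr_inr _ _).2 ⟨rfl, h.le⟩, fun hle => ?_⟩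
    exact h.not_ge ((extLe_inr_inr _ _).1 hle).2

end Aux

/-- Leaves of `T ⋊ T₀` are isolated (have a predecessor) iff leaves of `T₀` are. -/
theorem treeExt_leaves_isolated_iff {T T₀ : Type*} [PartialOrder T] [PartialOrder T₀]
    (hT : IsGoodTree T) (hT₀ : IsGoodTree T₀)
    (hT2 : ∃ a b : T, a ≠ b) (hT₀2 : ∃ a b : T₀, a ≠ b)
    (hstar : (∀ l : T, IsMax l → ∃ p, p ⋖ l) ∨ (∀ l : T, IsMax l → ¬ ∃ p, p ⋖ l))
    (hstarstar : (∃ l : T, IsMax l ∧ ¬ ∃ p, p ⋖ l) → ∃ r : T₀, ∀ t, r ≤ t) :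
    (∀ p : TreeExt T T₀, IsMax p → ∃ q, q ⋖ p) ↔ (∀ l : T₀, IsMax l → ∃ q, q ⋖ l) := by
  obtain ⟨hchain, hglb, hleaf, hmeet⟩ := hT
  obtain ⟨a₀, b₀, hab₀⟩ := hT₀2
  obtain ⟨a, b, hab⟩ := hT2
  obtain ⟨α, hαa, hαmax⟩ := hleaf a
  constructor
  · -- forward
    intro H l hl
    -- something strictly below l in T₀
    have hbelow : ∃ t₀ : T₀, t₀ < l := by
      obtain ⟨m, hm⟩ := hT₀.2.1 a₀ l
      obtain ⟨m', hm'⟩ := hT₀.2.1 b₀ l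
      have hml : m ≤ l := hm.1 (by simp)
      have hm'l : m' ≤ l := hm'.1 (by simp)
      by_cases h1 : m = l
      · by_cases h2 : m' = l
        · exfalso
          have ha' : l ≤ a₀ := h1 ▸ hm.1 (by simp)
          have hb' : l ≤ b₀ := h2 ▸ hm'.1 (by simp)
          have : a₀ = l := le_antisymm (hl ha') ha'
          have : b₀ = l := le_antisymm (hl hb') hb'
          exact hab₀ (by simp_all)
        · exact ⟨m', lt_of_le_of_ne hm'l h2⟩
      · exact ⟨m, lt_of_le_of_ne hml h1⟩
    obtain ⟨t₀, ht₀⟩ := hbelow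
    have hmax : @IsMax (TreeExt T T₀) Preorder.toLE (Sum.inr (⟨α, hαmax⟩, l)) := by
      intro q hq
      cases q with
      | inl y => exact ((extLe_inr_inl _ _).1 hq).elim
      | inr s =>
        obtain ⟨h1, h2⟩ := (extLe_inr_inr _ _).1 hq
        exact (extLe_inr_inr _ _).2 ⟨h1.symm, hl h2⟩
    obtain ⟨q, hq⟩ := H _ hmax
    cases q with
    | inl x =>
      exfalso
      have hx : x.1 ≤ α := (extLe_inl_inr _ _).1 hq.1.le
      have lt1 : @LT.lt (TreeExt T T₀) Preorder.toLT (Sum.inl x) (Sum.inr (⟨α, hαmax⟩, t₀)) := by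
        refine lt_iff_le_not_ge.2 ⟨(extLe_inl_inr _ _).2 hx, fun h => ?_⟩
        exact (extLe_inr_inl _ _).1 h
      exact hq.2 lt1 ((ext_inr_lt_inr _ _ _).2 ht₀)
    | inr p =>
      obtain ⟨β, s⟩ := p
      have hβ : β = ⟨α, hαmax⟩ := ((extLe_inr_inr _ _).1 hq.1.le).1
      subst hβ
      have hsl : s < l := (ext_inr_lt_inr _ _ _).1 hq.1
      refine ⟨s, hsl, fun u hu1 hu2 => ?_⟩
      exact hq.2 ((ext_inr_lt_inr _ _ _).2 hu1) ((ext_inr_lt_inr _ _ _).2 hu2)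
  · -- backward
    intro H p hp
    cases p with
    | inl x =>
      exfalso
      obtain ⟨γ, hxγ, hγmax⟩ := hleaf x.1
      have hle : @LE.le (TreeExt T T₀) Preorder.toLE (Sum.inl x) (Sum.inr (⟨γ, hγmax⟩, a₀)) :=
        (extLe_inl_inr _ _).2 hxγ
      exact (extLe_inr_inl _ _).1 (hp hle)
    | inr p =>
      obtain ⟨β, t⟩ := p
      have ht : IsMax t := by
        intro u hu
        exact ((extLe_inr_inr _ _).1 (hp ((extLe_inr_inr (β, t) (β, u)).2 ⟨rfl, hu⟩))).2
      obtain ⟨s, hs⟩ := H t ht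
      refine ⟨Sum.inr (β, s), (ext_inr_lt_inr _ _ _).2 hs.1, fun c hc1 hc2 => ?_⟩
      cases c with
      | inl y => exact (extLe_inr_inl _ _).1 hc1.le
      | inr q =>
        obtain ⟨γ, u⟩ := q
        have hγ : β = γ := ((extLe_inr_inr _ _).1 hc1.le).1
        subst hγ
        exact hs.2 ((ext_inr_lt_inr _ _ _).1 hc1) ((ext_inr_lt_inr _ _ _).1 hc2)
end

section
/- Let Λ be a model of Σ'' (good tree with convex subset E, E_≥ = upward closure of E, a function e : E_≥ → E with e(x) ≤ x and e(x) = max(E ∩ {y : y ≤ x}), leaves contained in E_≥ and disjoint from E). Define x ∼ y iff (x = y) or (x,y ∈ E_≥ and e(x) = e(y) < x∧y). Then for any x ∈ Λ whose ∼-class is not a singleton, the ∼-class of x equals the cone of x at e(x), namely {y ∈ Λ : y > e(x) and x∧y > e(x)}. -/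
/-- In a model of Σ'' (a good tree `Λ` with a convex set `E` disjoint from the
leaves, `e x` the greatest element of `E` below `x` for `x` in the upward closure
`E_≥` of `E`, and every leaf in `E_≥`), the ∼-class of any element `x` whose class
is not a singleton is the cone of `x` at `e(x)`, where
`x ∼ y :⇔ x = y ∨ (x,y ∈ E_≥ ∧ e x = e y < x ⊓ y)`. -/
theorem simClass_eq_cone {Λ : Type*} [SemilatticeInf Λ]
    (hchain : ∀ x y z : Λ, y ≤ x → z ≤ x → y ≤ z ∨ z ≤ y)
    (hleaves : ∀ x : Λ, ∃ l, x ≤ l ∧ IsMax l)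
    (E : Set Λ)
    (hconv : ∀ x y z : Λ, x ∈ E → z ∈ E → x ≤ y → y ≤ z → y ∈ E)
    (hEL : ∀ x ∈ E, ¬ IsMax x)
    (hL : ∀ x : Λ, IsMax x → ∃ a ∈ E, a ≤ x)
    (e : Λ → Λ)
    (he : ∀ x : Λ, (∃ a ∈ E, a ≤ x) →
      e x ∈ E ∧ e x ≤ x ∧ ∀ a ∈ E, a ≤ x → a ≤ e x) :
    ∀ x : Λ,
      (∃ y, y ≠ x ∧
        (x = y ∨ ((∃ a ∈ E, a ≤ x) ∧ (∃ a ∈ E, a ≤ y) ∧ e x = e y ∧ e x < x ⊓ y))) →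
      {y : Λ | x = y ∨ ((∃ a ∈ E, a ≤ x) ∧ (∃ a ∈ E, a ≤ y) ∧ e x = e y ∧ e x < x ⊓ y)}
        = {t : Λ | e x < t ⊓ x} := by
  intro x ⟨y, hyx, hy⟩
  rcases hy with h | ⟨hxE, hyE, hexy, hlt⟩
  · exact absurd h.symm hyx
  have hexx : e x < x := lt_of_lt_of_le hlt inf_le_left
  have hx := he x hxE
  ext t
  simp only [Set.mem_setOf_eq]
  constructor
  · rintro (rfl | ⟨_, _, _, h4⟩)
    · simpa using hexx
    · simpa [inf_comm] using h4
  · intro ht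
    have htx : e x ≤ t := le_of_lt (lt_of_lt_of_le ht inf_le_left)
    have htE : ∃ a ∈ E, a ≤ t := ⟨e x, hx.1, htx⟩
    have hte := he t htE
    -- show e t = e x
    have hle : e x ≤ e t := hte.2.2 (e x) hx.1 htx
    have hge : e t ≤ e x := by
      rcases hchain t (e t) (t ⊓ x) hte.2.1 inf_le_left with h | h
      · exact hx.2.2 (e t) hte.1 (le_trans h inf_le_right)
      · exfalso
        have : t ⊓ x ∈ E := hconv (e x) (t ⊓ x) (e t) hx.1 hte.1 (le_of_lt ht) h
        have := hx.2.2 (t ⊓ x) this inf_le_right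
        exact absurd (lt_of_lt_of_le ht this) (lt_irrefl _)
    have het : e t = e x := le_antisymm hge hle
    right
    exact ⟨hxE, htE, het.symm, by simpa [inf_comm] using ht⟩
end

section
/- Let Λ be a model of Σ'' in which additionally E is an antichain and every element of E_≥ ∖ E has a lower bound e(x) in E. Define x ∼ y iff (x,y ∉ E_≥ and x = y) or (x,y ∈ E_≥ and e(x) = e(y)). Then Λ is the disjoint union of E_< (the complement of E_≥) and of the thick cones Γ(x) = {t : x ≤ t} for x ∈ E; these thick cones are exactly the ∼-classes other than the singletons {y} with y ∈ E_<; and the quotient Λ/∼ carries a tree order induced by the order of Λ (a ∼-class A is below a ∼-class B iff some element of A is below some element of B), making Λ/∼ order-isomorphic to E_≤ = E_< ∪ E, with E corresponding to the set of maximal elements of Λ/∼ arising from E_≥. -/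
open Classical

/-- In a model of Σ'' in which `E` is moreover an antichain, with
`x ∼ y :⇔ (x,y ∉ E_≥ ∧ x = y) ∨ (x,y ∈ E_≥ ∧ e x = e y)` : `∼` is an equivalence
relation; the class of `x ∈ E_≥` is the thick cone at `e x` and the class of
`x ∉ E_≥` is `{x}`; `Λ` is the disjoint union of `E_<` and of the thick cones at
the points of `E`; and the quotient `Λ/∼`, with the induced order, is canonically
order-isomorphic to `E_≤ = E_< ∪ E` (via `φ x = e x` on `E_≥` and `φ x = x`
elsewhere), the classes coming from `E_≥` being exactly the maximal elements
arising from `E`. -/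
theorem antichain_quotient_structure {Λ : Type*} [SemilatticeInf Λ]
    (hchain : ∀ x y z : Λ, y ≤ x → z ≤ x → y ≤ z ∨ z ≤ y)
    (hleaves : ∀ x : Λ, ∃ l, x ≤ l ∧ IsMax l)
    (E : Set Λ)
    (hconv : ∀ x y z : Λ, x ∈ E → z ∈ E → x ≤ y → y ≤ z → y ∈ E)
    (hEL : ∀ x ∈ E, ¬ IsMax x)
    (hL : ∀ x : Λ, IsMax x → ∃ a ∈ E, a ≤ x)
    (e : Λ → Λ)
    (he : ∀ x : Λ, (∃ a ∈ E, a ≤ x) →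
      e x ∈ E ∧ e x ≤ x ∧ ∀ a ∈ E, a ≤ x → a ≤ e x)
    (hanti : IsAntichain (· ≤ ·) E) :
    let Ege : Set Λ := {x | ∃ a ∈ E, a ≤ x}
    let sim : Λ → Λ → Prop := fun x y =>
      (x ∉ Ege ∧ y ∉ Ege ∧ x = y) ∨ (x ∈ Ege ∧ y ∈ Ege ∧ e x = e y)
    let φ : Λ → Λ := fun x => if x ∈ Ege then e x else x
    Equivalence sim ∧
    (∀ x ∈ Ege, {y | sim x y} = {t : Λ | e x ≤ t}) ∧
    (∀ x ∉ Ege, {y | sim x y} = {x}) ∧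
    (Set.univ = Egeᶜ ∪ ⋃ a ∈ E, {t : Λ | a ≤ t}) ∧
    (∀ a ∈ E, ∀ b ∈ E, a ≠ b → Disjoint {t : Λ | a ≤ t} {t : Λ | b ≤ t}) ∧
    (Set.range φ = Egeᶜ ∪ E) ∧
    (∀ x y : Λ, sim x y ↔ φ x = φ y) ∧
    (∀ x y : Λ, (∃ x' y' : Λ, sim x x' ∧ sim y y' ∧ x' ≤ y') ↔ φ x ≤ φ y) ∧
    (∀ x ∈ Ege, ∀ y : Λ, φ x ≤ φ y → φ x = φ y) := by
  intro Ege sim φ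
  -- antichain: comparable elements of E are equal
  have hEeq : ∀ a ∈ E, ∀ b ∈ E, a ≤ b → a = b := by
    intro a ha b hb hab
    by_contra hne
    exact hanti ha hb hne hab
  have heE : ∀ x ∈ Ege, e x ∈ E := fun x hx => (he x hx).1
  have hele : ∀ x ∈ Ege, e x ≤ x := fun x hx => (he x hx).2.1
  have hEge_e : ∀ x ∈ Ege, e x ∈ Ege := fun x hx => ⟨e x, heE x hx, le_refl _⟩
  -- e is constant going up: if x ∈ Ege and x ≤ y then e x = e y
  have hemono : ∀ x ∈ Ege, ∀ y : Λ, x ≤ y → e x = e y := by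
    intro x hx y hxy
    have hy : y ∈ Ege := ⟨e x, heE x hx, le_trans (hele x hx) hxy⟩
    exact hEeq _ (heE x hx) _ (heE y hy)
      ((he y hy).2.2 _ (heE x hx) (le_trans (hele x hx) hxy))
  have hee : ∀ x ∈ Ege, e (e x) = e x :=
    fun x hx => (hemono (e x) (hEge_e x hx) x (hele x hx)).symm ▸
      (hemono (e x) (hEge_e x hx) x (hele x hx)).symm
  have heeq : ∀ a ∈ E, e a = a := by
    intro a ha
    have haG : a ∈ Ege := ⟨a, ha, le_refl _⟩
    exact hEeq _ (heE a haG) _ ha (hele a haG)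
  have hsimx : ∀ x, sim x x := by
    intro x
    by_cases hx : x ∈ Ege
    · exact Or.inr ⟨hx, hx, rfl⟩
    · exact Or.inl ⟨hx, hx, rfl⟩
  have hequiv : Equivalence sim := by
    constructor
    · exact hsimx
    · rintro x y (⟨h1, h2, h3⟩ | ⟨h1, h2, h3⟩)
      · exact Or.inl ⟨h2, h1, h3.symm⟩
      · exact Or.inr ⟨h2, h1, h3.symm⟩
    · rintro x y z (⟨h1, h2, h3⟩ | ⟨h1, h2, h3⟩) (⟨g1, g2, g3⟩ | ⟨g1, g2, g3⟩)
      · exact Or.inl ⟨h1, g2, h3.trans g3⟩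
      · exact absurd g1 h2
      · exact absurd h2 g1
      · exact Or.inr ⟨h1, g2, h3.trans g3⟩
  refine ⟨hequiv, ?_, ?_, ?_, ?_, ?_, ?_, ?_, ?_⟩
  · -- class of x ∈ Ege is cone at e x
    intro x hx
    ext t
    simp only [Set.mem_setOf_eq]
    constructor
    · rintro (⟨h1, _, _⟩ | ⟨_, ht, hxt⟩)
      · exact absurd hx h1
      · exact hxt ▸ hele t ht
    · intro hle
      have ht : t ∈ Ege := ⟨e x, heE x hx, hle⟩
      exact Or.inr ⟨hx, ht, hee x hx ▸ hemono (e x) (hEge_e x hx) t hle⟩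
  · -- class of x ∉ Ege is {x}
    intro x hx
    ext t
    simp only [Set.mem_setOf_eq, Set.mem_singleton_iff]
    constructor
    · rintro (⟨_, _, h3⟩ | ⟨h1, _, _⟩)
      · exact h3.symm
      · exact absurd h1 hx
    · rintro rfl; exact hsimx _
  · -- covering
    ext x
    simp only [Set.mem_univ, true_iff, Set.mem_union, Set.mem_compl_iff,
      Set.mem_iUnion, Set.mem_setOf_eq]
    by_cases hx : x ∈ Ege
    · exact Or.inr ⟨e x, heE x hx, hele x hx⟩
    · exact Or.inl hx
  · -- disjointness
    intro a ha b hb hab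
    rw [Set.disjoint_left]
    intro t hta htb
    rcases hchain t a b hta htb with h | h
    · exact hab (hEeq a ha b hb h)
    · exact hab (hEeq b hb a ha h).symm
  · -- range φ
    ext y
    simp only [Set.mem_range, Set.mem_union, Set.mem_compl_iff]
    constructor
    · rintro ⟨x, rfl⟩
      by_cases hx : x ∈ Ege
      · simp only [φ, if_pos hx]; exact Or.inr (heE x hx)
      · simp only [φ, if_neg hx]; exact Or.inl hx
    · rintro (hy | hy)
      · exact ⟨y, by simp [φ, hy]⟩
      · refine ⟨y, ?_⟩
        have hyG : y ∈ Ege := ⟨y, hy, le_refl _⟩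
        simp [φ, hyG, heeq y hy]
  · -- sim iff φ eq
    intro x y
    constructor
    · rintro (⟨h1, h2, h3⟩ | ⟨h1, h2, h3⟩)
      · simp [φ, h1, h2, h3]
      · simp [φ, h1, h2, h3]
    · intro h
      by_cases hx : x ∈ Ege <;> by_cases hy : y ∈ Ege
      · exact Or.inr ⟨hx, hy, by simpa [φ, hx, hy] using h⟩
      · exfalso; apply hy
        have : e x = y := by simpa [φ, hx, hy] using h
        exact ⟨e x, heE x hx, this ▸ le_refl _⟩
      · exfalso; apply hx
        have : x = e y := by simpa [φ, hx, hy] using h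
        exact ⟨e y, heE y hy, this ▸ le_refl _⟩
      · exact Or.inl ⟨hx, hy, by simpa [φ, hx, hy] using h⟩
  · -- order on quotient
    intro x y
    constructor
    · rintro ⟨x', y', hxx', hyy', hle⟩
      have hφx : φ x = φ x' := by
        rcases hxx' with ⟨h1, h2, h3⟩ | ⟨h1, h2, h3⟩ <;> simp [φ, h1, h2, h3]
      have hφy : φ y = φ y' := by
        rcases hyy' with ⟨h1, h2, h3⟩ | ⟨h1, h2, h3⟩ <;> simp [φ, h1, h2, h3]
      rw [hφx, hφy]
      by_cases hx' : x' ∈ Ege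
      · have hy' : y' ∈ Ege := ⟨e x', heE x' hx', le_trans (hele x' hx') hle⟩
        have : e x' = e y' := hEeq _ (heE x' hx') _ (heE y' hy')
          ((he y' hy').2.2 _ (heE x' hx') (le_trans (hele x' hx') hle))
        simp [φ, hx', hy', this]
      · by_cases hy' : y' ∈ Ege
        · have : x' ≤ e y' := by
            rcases hchain y' x' (e y') hle (hele y' hy') with h | h
            · exact h
            · exact absurd ⟨e y', heE y' hy', h⟩ hx'
          simpa [φ, hx', hy'] using this
        · simpa [φ, hx', hy'] using hle
    · intro h
      by_cases hx : x ∈ Ege <;> by_cases hy : y ∈ Ege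
      · refine ⟨e x, e y, ?_, ?_, ?_⟩
        · exact Or.inr ⟨hx, hEge_e x hx, (hee x hx).symm⟩
        · exact Or.inr ⟨hy, hEge_e y hy, (hee y hy).symm⟩
        · simpa [φ, hx, hy] using h
      · exfalso; apply hy
        have : e x ≤ y := by simpa [φ, hx, hy] using h
        exact ⟨e x, heE x hx, this⟩
      · refine ⟨x, y, hsimx x, hsimx y, ?_⟩
        have : x ≤ e y := by simpa [φ, hx, hy] using h
        exact le_trans this (hele y hy)
      · exact ⟨x, y, hsimx x, hsimx y, by simpa [φ, hx, hy] using h⟩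
  · -- maximality
    intro x hx y h
    by_cases hy : y ∈ Ege
    · have hle : e x ≤ e y := by simpa [φ, hx, hy] using h
      have := hEeq _ (heE x hx) _ (heE y hy) hle
      simp [φ, hx, hy, this]
    · exfalso; apply hy
      have : e x ≤ y := by simpa [φ, hx, hy] using h
      exact ⟨e x, heE x hx, this⟩
end

section
/- Unfolding a labeled semilattice tree: let Ξ₀ be a finite meet-semilattice tree with root A₀, labeled by positive integers n_A for A ∈ Ξ₀, such that n_{A₀} = 1 and n_{A⁻} divides n_A whenever A ≠ A₀ (A⁻ the predecessor of A in Ξ₀). Then there exists a partial order Ξ which is a disjoint union of antichains U_A (A ∈ Ξ₀) with |U_A| = n_A, such that: each element of U_A (A ≠ A₀) lies above exactly one element of U_{A⁻}, each element of U_{A⁻} lies below exactly n_A/n_{A⁻} elements of U_A, the order on Ξ is generated by these covering relations, Ξ is a meet-semilattice tree, and the quotient map U_A ↦ A is order-preserving with the induced order on {U_A} isomorphic to Ξ₀. Moreover Ξ is unique up to isomorphism over Ξ₀, and every automorphism of (Ξ₀, (n_A)) lifts to an automorphism of Ξ. -/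
/-!
Existence: let level `A` carry the residues modulo `n A`, with `(A, m) ≤ (B, k)` iff `A ≤ B` and
`k ≡ m [MOD n A]`. Divisibility along the tree makes this a tree order, each residue mod
`n (pred A)` has exactly `n A / n (pred A)` lifts below `n A`, and the meet of two points sits at
the highest common level where their residues agree (`n ⊥ = 1` puts the root level among these).

Uniqueness: `x ≤ y` iff `x` is the point below `y` at level `π x`, so an isomorphism over `Ξ₀` is
the same as fiber bijections commuting with the maps down to lower levels. The fiber over `A`
splits into blocks of size `n A / n (pred A)` over the points of the fiber over `pred A`, so such
bijections are built level by level from the root by matching blocks arbitrarily.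

Lifting `σ`: composing the projection of an unfolding with `σ⁻¹` gives another unfolding, since
`σ` preserves the labels and commutes with `pred`; an isomorphism over `Ξ₀` to it lifts `σ`.
-/

/-- An unfolding of a finite labeled meet-semilattice tree `Ξ₀` (with labels
`n : Ξ₀ → ℕ` and predecessor function `pred`): a meet-semilattice tree `X` together
with a projection `π : X → Ξ₀` whose fibers `U_A` are antichains of cardinality
`n A`, such that comparabilities project to comparabilities, every element of a
fiber has exactly one element below it in each smaller fiber, and each element of
the fiber over `pred A` lies below exactly `n A / n (pred A)` elements of the fiber
over `A`. -/
structure Unfolding (Ξ₀ : Type*) [SemilatticeInf Ξ₀] [OrderBot Ξ₀]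
    (n : Ξ₀ → ℕ) (pred : Ξ₀ → Ξ₀) : Type _ where
  X : Type
  le : X → X → Prop
  po : IsPartialOrder X le
  π : X → Ξ₀
  fiber_card : ∀ A : Ξ₀, Nat.card {x : X // π x = A} = n A
  fiber_antichain : ∀ x y : X, π x = π y → le x y → x = y
  mono : ∀ x y : X, le x y → π x ≤ π y
  below_unique : ∀ (x : X) (A : Ξ₀), A ≤ π x → ∃! y : X, π y = A ∧ le y x
  fiber_over : ∀ A : Ξ₀, A ≠ ⊥ → ∀ y : X, π y = pred A →
      Nat.card {x : X // π x = A ∧ le y x ∧ y ≠ x} = n A / n (pred A)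
  chains : ∀ x y z : X, le y x → le z x → le y z ∨ le z y
  glb : ∀ x y : X, ∃ m : X, le m x ∧ le m y ∧ ∀ z, le z x → le z y → le z m

theorem Nat.count_mod_eq_of_dvd {N d r : ℕ} (hdvd : d ∣ N) (hr : r < d) :
    Nat.count (· % d = r) N = N / d := by
  have h := Nat.count_modEq_card N (r.zero_le.trans_lt hr) r
  simpa only [Nat.ModEq, Nat.mod_eq_of_lt hr, Nat.mod_eq_zero_of_dvd hdvd, Nat.not_lt_zero,
    if_false, add_zero] using h

section Tree
variable {Ξ₀ : Type*} [PartialOrder Ξ₀]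

theorem le_of_lt_of_covBy (hchain : ∀ x y z : Ξ₀, y ≤ x → z ≤ x → y ≤ z ∨ z ≤ y)
    {A B C : Ξ₀} (hC : C ⋖ A) (hB : B < A) : B ≤ C :=
  (hchain A B C hB.le hC.le).elim id fun hCB =>
    (hCB.lt_or_eq.resolve_left fun h => hC.2 h hB).ge

theorem eq_of_covBy_of_covBy (hchain : ∀ x y z : Ξ₀, y ≤ x → z ≤ x → y ≤ z ∨ z ≤ y)
    {A B C : Ξ₀} (hB : B ⋖ A) (hC : C ⋖ A) : B = C :=
  (le_of_lt_of_covBy hchain hC hB.lt).antisymm (le_of_lt_of_covBy hchain hB hC.lt)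

theorem dvd_of_le_of_pred_dvd [OrderBot Ξ₀] [WellFoundedLT Ξ₀] {M : Type*} [Monoid M]
    (hchain : ∀ x y z : Ξ₀, y ≤ x → z ≤ x → y ≤ z ∨ z ≤ y)
    {n : Ξ₀ → M} {pred : Ξ₀ → Ξ₀} (hpred : ∀ A : Ξ₀, A ≠ ⊥ → pred A ⋖ A)
    (hdvd : ∀ A : Ξ₀, A ≠ ⊥ → n (pred A) ∣ n A) {A B : Ξ₀} (h : A ≤ B) : n A ∣ n B := by
  induction B using WellFoundedLT.induction with
  | ind B ih =>
    obtain rfl | hlt := h.eq_or_lt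
    · rfl
    · have hB := hpred B hlt.ne_bot
      exact (ih _ hB.lt (le_of_lt_of_covBy hchain hB hlt)).trans (hdvd B hlt.ne_bot)

theorem OrderIso.apply_pred [OrderBot Ξ₀] {pred : Ξ₀ → Ξ₀}
    (hchain : ∀ x y z : Ξ₀, y ≤ x → z ≤ x → y ≤ z ∨ z ≤ y)
    (hpred : ∀ A : Ξ₀, A ≠ ⊥ → pred A ⋖ A) (σ : Ξ₀ ≃o Ξ₀) {A : Ξ₀} (hA : A ≠ ⊥) :
    σ (pred A) = pred (σ A) :=
  eq_of_covBy_of_covBy hchain ((apply_covBy_apply_iff σ).mpr (hpred A hA))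
    (hpred _ ((map_eq_bot_iff σ).not.mpr hA))

end Tree

/-- Levels are numbered through `Finite.equivFin` so that the carrier lives in `Type`. -/
def Residue {Ξ₀ : Type*} [Finite Ξ₀] (n : Ξ₀ → ℕ) : Type :=
  {p : Fin (Nat.card Ξ₀) × ℕ // p.2 < n ((Finite.equivFin Ξ₀).symm p.1)}

namespace Residue
variable {Ξ₀ : Type*} [Finite Ξ₀] {n : Ξ₀ → ℕ}

noncomputable def level (x : Residue n) : Ξ₀ := (Finite.equivFin Ξ₀).symm x.1.1

def val (x : Residue n) : ℕ := x.1.2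

theorem val_lt (x : Residue n) : x.val < n x.level := x.2

noncomputable def mk (A : Ξ₀) (m : ℕ) (h : m < n A) : Residue n :=
  ⟨(Finite.equivFin Ξ₀ A, m), by simpa using h⟩

@[simp] theorem level_mk (A : Ξ₀) (m : ℕ) (h : m < n A) : (mk A m h).level = A := by
  simp [mk, level]

@[simp] theorem val_mk (A : Ξ₀) (m : ℕ) (h : m < n A) : (mk A m h).val = m := rfl

theorem ext {x y : Residue n} (hl : x.level = y.level) (hv : x.val = y.val) : x = y :=
  Subtype.ext (Prod.ext ((Finite.equivFin Ξ₀).symm.injective hl) hv)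

noncomputable def levelEquiv (A : Ξ₀) (P : ℕ → Prop) :
    {x : Residue n // x.level = A ∧ P x.val} ≃ {m // m < n A ∧ P m} where
  toFun x := ⟨x.1.val, by simpa [x.2.1] using x.1.val_lt, x.2.2⟩
  invFun m := ⟨mk A m m.2.1, level_mk .., m.2.2⟩
  left_inv x := Subtype.ext (ext (by simp [x.2.1]) rfl)
  right_inv m := rfl

theorem card_level_eq_count (A : Ξ₀) (P : ℕ → Prop) [DecidablePred P] :
    Nat.card {x : Residue n // x.level = A ∧ P x.val} = Nat.count P (n A) := by
  rw [Nat.count_eq_card_fintype, Fintype.card_eq_nat_card]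
  exact Nat.card_congr (levelEquiv A P)

variable [Preorder Ξ₀]

protected def le (x y : Residue n) : Prop := x.level ≤ y.level ∧ x.val = y.val % n x.level

protected theorem le_refl (x : Residue n) : x.le x :=
  ⟨le_rfl, (Nat.mod_eq_of_lt x.val_lt).symm⟩

theorem eq_of_le_of_level_eq {x y : Residue n} (h : x.le y) (hl : x.level = y.level) :
    x = y :=
  ext hl (by rw [h.2, hl, Nat.mod_eq_of_lt y.val_lt])

protected theorem le_trans (hdvd : ∀ ⦃A B : Ξ₀⦄, A ≤ B → n A ∣ n B) {x y z : Residue n}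
    (hxy : x.le y) (hyz : y.le z) : x.le z :=
  ⟨hxy.1.trans hyz.1, by rw [hxy.2, hyz.2, Nat.mod_mod_of_dvd _ (hdvd hxy.1)]⟩

theorem le_of_le_of_level_le (hdvd : ∀ ⦃A B : Ξ₀⦄, A ≤ B → n A ∣ n B) {x y z : Residue n}
    (hy : y.le x) (hz : z.le x) (h : y.level ≤ z.level) : y.le z :=
  ⟨h, by rw [hy.2, hz.2, Nat.mod_mod_of_dvd _ (hdvd h)]⟩

theorem le_or_le_of_le_of_le (hdvd : ∀ ⦃A B : Ξ₀⦄, A ≤ B → n A ∣ n B)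
    (hchain : ∀ x y z : Ξ₀, y ≤ x → z ≤ x → y ≤ z ∨ z ≤ y) {x y z : Residue n} (hy : y.le x)
    (hz : z.le x) : y.le z ∨ z.le y :=
  (hchain _ _ _ hy.1 hz.1).imp (le_of_le_of_level_le hdvd hy hz)
    (le_of_le_of_level_le hdvd hz hy)

theorem existsUnique_le_of_level_le (hpos : ∀ A, 0 < n A) (x : Residue n) {A : Ξ₀}
    (hA : A ≤ x.level) : ∃! y : Residue n, y.level = A ∧ y.le x := by
  refine ⟨mk A (x.val % n A) (Nat.mod_lt _ (hpos A)),
    ⟨level_mk .., by simpa using hA, by simp⟩, ?_⟩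
  rintro y ⟨rfl, hyx⟩
  exact ext (by simp) (by simpa using hyx.2)

theorem card_above_eq_div {A B : Ξ₀} (hBA : B < A) (hdvd : n B ∣ n A) (y : Residue n)
    (hy : y.level = B) :
    Nat.card {x : Residue n // x.level = A ∧ y.le x ∧ y ≠ x} = n A / n B := by
  have hcond : ∀ x : Residue n, x.level = A → (y.le x ∧ y ≠ x ↔ x.val % n B = y.val) :=
    fun x hx => ⟨fun h => by rw [h.1.2, hy], fun h =>
      ⟨⟨by rw [hy, hx]; exact hBA.le, by rw [hy, h]⟩,
        fun hyx => hBA.ne (by rw [← hy, ← hx, hyx])⟩⟩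
  rw [Nat.card_congr (Equiv.subtypeEquivRight fun x => and_congr_right (hcond x)),
    card_level_eq_count A (· % n B = y.val), Nat.count_mod_eq_of_dvd hdvd (hy ▸ y.val_lt)]

theorem exists_glb [OrderBot Ξ₀] (hpos : ∀ A, 0 < n A)
    (hdvd : ∀ ⦃A B : Ξ₀⦄, A ≤ B → n A ∣ n B)
    (hchain : ∀ x y z : Ξ₀, y ≤ x → z ≤ x → y ≤ z ∨ z ≤ y) (hbot : n ⊥ = 1)
    (x y : Residue n) :
    ∃ m : Residue n, m.le x ∧ m.le y ∧ ∀ z : Residue n, z.le x → z.le y → z.le m := by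
  set S : Set Ξ₀ := {B | (B ≤ x.level ∧ B ≤ y.level) ∧ x.val % n B = y.val % n B}
  have hbotS : ⊥ ∈ S := ⟨⟨bot_le, bot_le⟩, by simp [hbot, Nat.mod_one]⟩
  obtain ⟨C, ⟨hCxy, hCval⟩, hCmax⟩ := S.toFinite.exists_maximal ⟨⊥, hbotS⟩
  have hle_C : ∀ B ∈ S, B ≤ C := fun B hB =>
    (hchain _ _ _ hB.1.1 hCxy.1).elim id (hCmax hB)
  let m := mk C (x.val % n C) (Nat.mod_lt _ (hpos C))
  have hmx : m.le x := ⟨by simpa [m] using hCxy.1, by simp [m]⟩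
  refine ⟨m, hmx, ⟨by simpa [m] using hCxy.2, by simpa [m] using hCval⟩,
    fun z hzx hzy => ?_⟩
  have hzS : z.level ∈ S := ⟨⟨hzx.1, hzy.1⟩, by rw [← hzx.2, ← hzy.2]⟩
  exact le_of_le_of_level_le hdvd hzx hmx (by simpa [m] using hle_C _ hzS)

end Residue

noncomputable def residueUnfolding {Ξ₀ : Type*} [Finite Ξ₀] [SemilatticeInf Ξ₀] [OrderBot Ξ₀]
    {n : Ξ₀ → ℕ} {pred : Ξ₀ → Ξ₀} (hchain : ∀ x y z : Ξ₀, y ≤ x → z ≤ x → y ≤ z ∨ z ≤ y)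
    (hpos : ∀ A, 0 < n A) (hbot : n ⊥ = 1) (hpred : ∀ A : Ξ₀, A ≠ ⊥ → pred A ⋖ A)
    (hdvd : ∀ A : Ξ₀, A ≠ ⊥ → n (pred A) ∣ n A) : Unfolding Ξ₀ n pred :=
  have hdvd_of_le : ∀ ⦃A B : Ξ₀⦄, A ≤ B → n A ∣ n B :=
    fun _ _ => dvd_of_le_of_pred_dvd hchain hpred hdvd
  { X := Residue n
    le := Residue.le
    po :=
      { refl := Residue.le_refl
        trans := fun _ _ _ => Residue.le_trans hdvd_of_le
        antisymm := fun _ _ hxy hyx => Residue.eq_of_le_of_level_eq hxy (hxy.1.antisymm hyx.1) }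
    π := Residue.level
    fiber_card := fun A => by
      simpa using Residue.card_level_eq_count (n := n) A (fun _ => True)
    fiber_antichain := fun _ _ hl hxy => Residue.eq_of_le_of_level_eq hxy hl
    mono := fun _ _ hxy => hxy.1
    below_unique := fun x _ => Residue.existsUnique_le_of_level_le hpos x
    fiber_over := fun A hA y hy =>
      Residue.card_above_eq_div (hpred A hA).lt (hdvd A hA) y hy
    chains := fun _ _ _ => Residue.le_or_le_of_le_of_le hdvd_of_le hchain
    glb := Residue.exists_glb hpos hdvd_of_le hchain hbot }

namespace Unfolding
variable {Ξ₀ : Type*} [SemilatticeInf Ξ₀] [OrderBot Ξ₀] {n : Ξ₀ → ℕ} {pred : Ξ₀ → Ξ₀}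

section Down
variable (U : Unfolding Ξ₀ n pred)

protected theorem le_refl (x : U.X) : U.le x x := U.po.refl x

protected theorem le_trans {x y z : U.X} (hxy : U.le x y) (hyz : U.le y z) : U.le x z :=
  U.po.trans _ _ _ hxy hyz

abbrev fiber (A : Ξ₀) : Type := {x : U.X // U.π x = A}

theorem finite_fiber (hpos : ∀ A, 0 < n A) (A : Ξ₀) : Finite (U.fiber A) :=
  Nat.finite_of_card_ne_zero (by rw [U.fiber_card]; exact (hpos A).ne')

open Classical in
/-- The point of level `A` below `x` (junk value `x` when `A ≰ π x`). -/
noncomputable def down (x : U.X) (A : Ξ₀) : U.X :=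
  if h : A ≤ U.π x then (U.below_unique x A h).exists.choose else x

variable {U}

theorem π_down {x : U.X} {A : Ξ₀} (h : A ≤ U.π x) : U.π (U.down x A) = A := by
  rw [down, dif_pos h]; exact (U.below_unique x A h).exists.choose_spec.1

theorem down_le {x : U.X} {A : Ξ₀} (h : A ≤ U.π x) : U.le (U.down x A) x := by
  rw [down, dif_pos h]; exact (U.below_unique x A h).exists.choose_spec.2

theorem down_eq {x y : U.X} (hy : U.le y x) : U.down x (U.π y) = y :=
  have h := U.mono y x hy
  (U.below_unique x _ h).unique ⟨π_down h, down_le h⟩ ⟨rfl, hy⟩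

theorem down_self (x : U.X) : U.down x (U.π x) = x := down_eq (U.le_refl x)

theorem le_iff_down_eq {x y : U.X} : U.le y x ↔ U.π y ≤ U.π x ∧ U.down x (U.π y) = y :=
  ⟨fun h => ⟨U.mono y x h, down_eq h⟩, fun ⟨h, hy⟩ => hy ▸ down_le h⟩

theorem down_down {x : U.X} {A B : Ξ₀} (hA : A ≤ U.π x) (hB : B ≤ A) :
    U.down (U.down x A) B = U.down x B := by
  have hB' : B ≤ U.π (U.down x A) := (π_down hA).symm ▸ hB
  have h := down_eq (U.le_trans (down_le hB') (down_le hA))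
  rw [π_down hB'] at h
  exact h.symm

noncomputable def fiberDown {A B : Ξ₀} (h : B ≤ A) (x : U.fiber A) : U.fiber B :=
  ⟨U.down x.1 B, π_down (h.trans_eq x.2.symm)⟩

theorem card_fiberDown_preimage {A : Ξ₀} (hA : A ≠ ⊥) (hlt : pred A < A)
    (u : U.fiber (pred A)) :
    Nat.card {x : U.fiber A // fiberDown hlt.le x = u} = n A / n (pred A) := by
  rw [← U.fiber_over A hA u.1 u.2]
  refine Nat.card_congr ((Equiv.subtypeSubtypeEquivSubtypeExists _ _).trans
    (Equiv.subtypeEquivRight fun x => ?_))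
  simp only [fiberDown, Subtype.ext_iff]
  constructor
  · rintro ⟨hx, hux⟩
    exact ⟨hx, hux ▸ down_le (hx ▸ hlt.le), fun h => hlt.ne (u.2.symm.trans (h ▸ hx))⟩
  · rintro ⟨hx, hux, -⟩
    exact ⟨hx, by simpa only [u.2] using down_eq hux⟩

end Down

section Equiv
variable [WellFoundedLT Ξ₀] (hpos : ∀ A, 0 < n A) (hpred : ∀ A : Ξ₀, A ≠ ⊥ → pred A ⋖ A)
  (hchain : ∀ x y z : Ξ₀, y ≤ x → z ≤ x → y ≤ z ∨ z ≤ y) (U V : Unfolding Ξ₀ n pred)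

noncomputable def blockEquiv {A : Ξ₀} (hA : A ≠ ⊥) (hlt : pred A < A)
    (u : U.fiber (pred A)) (v : V.fiber (pred A)) :
    {x : U.fiber A // fiberDown hlt.le x = u} ≃ {y : V.fiber A // fiberDown hlt.le y = v} :=
  have := U.finite_fiber hpos A
  have := V.finite_fiber hpos A
  Classical.choice <| Finite.card_eq.mp <| by
    rw [card_fiberDown_preimage hA hlt, card_fiberDown_preimage hA hlt]

open Classical in
noncomputable def fiberEquiv : ∀ A : Ξ₀, U.fiber A ≃ V.fiber A :=
  wellFounded_lt.fix fun A rec =>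
    if hA : A = ⊥ then
      have := U.finite_fiber hpos A
      have := V.finite_fiber hpos A
      Classical.choice <| Finite.card_eq.mp <| by rw [U.fiber_card, V.fiber_card]
    else
      have hlt := (hpred A hA).lt
      (Equiv.sigmaFiberEquiv (fiberDown hlt.le)).symm.trans <|
        (Equiv.sigmaCongr (rec (pred A) hlt) fun u => blockEquiv hpos U V hA hlt u _).trans
          (Equiv.sigmaFiberEquiv (fiberDown hlt.le))

theorem fiberDown_fiberEquiv {A : Ξ₀} (hA : A ≠ ⊥) (x : U.fiber A) :
    fiberDown (hpred A hA).le (fiberEquiv hpos hpred U V A x) =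
      fiberEquiv hpos hpred U V (pred A) (fiberDown (hpred A hA).le x) := by
  rw [fiberEquiv, WellFounded.fix_eq, dif_neg hA]
  exact (blockEquiv hpos U V hA _ _ _ _).2

protected noncomputable def equiv : U.X ≃ V.X :=
  (Equiv.sigmaFiberEquiv U.π).symm.trans <|
    (Equiv.sigmaCongrRight (fiberEquiv hpos hpred U V)).trans (Equiv.sigmaFiberEquiv V.π)

variable {U V}

theorem equiv_apply_val {A : Ξ₀} (x : U.fiber A) :
    Unfolding.equiv hpos hpred U V x.1 = (fiberEquiv hpos hpred U V A x).1 := by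
  obtain ⟨x, rfl⟩ := x
  rfl

theorem π_equiv (x : U.X) : V.π (Unfolding.equiv hpos hpred U V x) = U.π x :=
  (fiberEquiv hpos hpred U V _ ⟨x, rfl⟩).2

theorem equiv_down_pred {x : U.X} (hx : U.π x ≠ ⊥) :
    Unfolding.equiv hpos hpred U V (U.down x (pred (U.π x))) =
      V.down (Unfolding.equiv hpos hpred U V x) (pred (U.π x)) := by
  have h := congrArg Subtype.val (fiberDown_fiberEquiv hpos hpred U V hx ⟨x, rfl⟩)
  rw [← equiv_apply_val] at h
  exact h.symm

include hchain

theorem equiv_down {x : U.X} {B : Ξ₀} (hB : B ≤ U.π x) :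
    Unfolding.equiv hpos hpred U V (U.down x B) = V.down (Unfolding.equiv hpos hpred U V x) B := by
  induction hA : U.π x using WellFoundedLT.induction generalizing x with
  | ind A ih =>
    subst hA
    obtain rfl | hBx := hB.eq_or_lt
    · rw [down_self, ← π_equiv hpos hpred x, down_self]
    · have hx : U.π x ≠ ⊥ := hBx.ne_bot
      have hcov := hpred _ hx
      have hBp : B ≤ pred (U.π x) := le_of_lt_of_covBy hchain hcov hBx
      have hπp : U.π (U.down x (pred (U.π x))) = pred (U.π x) := π_down hcov.le
      rw [← down_down hcov.le hBp, ih _ hcov.lt (hBp.trans_eq hπp.symm) hπp,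
        equiv_down_pred hpos hpred hx,
        down_down ((π_equiv hpos hpred x).symm ▸ hcov.le) hBp]

theorem le_iff_le_equiv (x y : U.X) :
    U.le x y ↔ V.le (Unfolding.equiv hpos hpred U V x) (Unfolding.equiv hpos hpred U V y) := by
  rw [le_iff_down_eq, le_iff_down_eq, π_equiv, π_equiv]
  refine and_congr_right fun h => ?_
  rw [← equiv_down hpos hpred hchain h, (Unfolding.equiv hpos hpred U V).injective.eq_iff]

include hpos hpred in
variable (U V) in
theorem exists_equiv :
    ∃ f : U.X ≃ V.X, (∀ x, V.π (f x) = U.π x) ∧ ∀ x y, U.le x y ↔ V.le (f x) (f y) :=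
  ⟨Unfolding.equiv hpos hpred U V, π_equiv hpos hpred, le_iff_le_equiv hpos hpred hchain⟩

end Equiv

def reindex (hchain : ∀ x y z : Ξ₀, y ≤ x → z ≤ x → y ≤ z ∨ z ≤ y)
    (hpred : ∀ A : Ξ₀, A ≠ ⊥ → pred A ⋖ A) (U : Unfolding Ξ₀ n pred) (σ : Ξ₀ ≃o Ξ₀)
    (hσ : ∀ A, n (σ A) = n A) : Unfolding Ξ₀ n pred where
  X := U.X
  le := U.le
  po := U.po
  π x := σ.symm (U.π x)
  fiber_card A := by
    simp_rw [OrderIso.symm_apply_eq]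
    rw [U.fiber_card, hσ]
  fiber_antichain x y h := U.fiber_antichain x y (σ.symm.injective h)
  mono x y h := σ.symm.monotone (U.mono x y h)
  below_unique x A hA := by
    simpa only [OrderIso.symm_apply_eq] using U.below_unique x (σ A) (σ.le_symm_apply.mp hA)
  fiber_over A hA y hy := by
    rw [OrderIso.symm_apply_eq, σ.apply_pred hchain hpred hA] at hy
    simp_rw [OrderIso.symm_apply_eq]
    rw [U.fiber_over _ ((map_eq_bot_iff σ).not.mpr hA) y hy, hσ, ← σ.apply_pred hchain hpred hA,
      hσ]
  chains := U.chains
  glb := U.glb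

end Unfolding

/-- Unfolding a finite labeled meet-semilattice tree: existence, uniqueness up to
isomorphism over `Ξ₀`, and lifting of automorphisms of the labeled tree `Ξ₀`. -/
theorem unfolding_exists_unique_lifts (Ξ₀ : Type*) [SemilatticeInf Ξ₀]
    [OrderBot Ξ₀] [Fintype Ξ₀]
    (hchain : ∀ x y z : Ξ₀, y ≤ x → z ≤ x → y ≤ z ∨ z ≤ y)
    (n : Ξ₀ → ℕ) (pred : Ξ₀ → Ξ₀)
    (hpos : ∀ A, 0 < n A) (hbot : n ⊥ = 1)
    (hpred : ∀ A : Ξ₀, A ≠ ⊥ → pred A ⋖ A)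
    (hdvd : ∀ A : Ξ₀, A ≠ ⊥ → n (pred A) ∣ n A) :
    Nonempty (Unfolding Ξ₀ n pred) ∧
    (∀ U V : Unfolding Ξ₀ n pred, ∃ f : U.X ≃ V.X,
      (∀ x, V.π (f x) = U.π x) ∧ ∀ x y, U.le x y ↔ V.le (f x) (f y)) ∧
    (∀ (U : Unfolding Ξ₀ n pred) (σ : Ξ₀ ≃o Ξ₀), (∀ A, n (σ A) = n A) →
      ∃ τ : U.X ≃ U.X,
        (∀ x, U.π (τ x) = σ (U.π x)) ∧ ∀ x y, U.le x y ↔ U.le (τ x) (τ y)) := by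
  refine ⟨⟨residueUnfolding hchain hpos hbot hpred hdvd⟩,
    Unfolding.exists_equiv hpos hpred hchain, fun U σ hσ => ?_⟩
  obtain ⟨τ, hτπ, hτle⟩ :=
    Unfolding.exists_equiv hpos hpred hchain U (U.reindex hchain hpred σ hσ)
  exact ⟨τ, fun x => σ.symm_apply_eq.mp (hτπ x), hτle⟩
end
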